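/- Let n ≥ 1, α, β, γ ∈ k^n, and λ ∈ (k^×)^n. Define α'_i = λ_i λ_{i−1}^{-1} α_i, β'_i = λ_{i+1} λ_{i−1}^{-1} β_i, γ'_i = λ_{i−1}^{-1} γ_i. Then the assignment e_i ↦ e_i, u_i ↦ λ_i u_i, d_i ↦ d_i extends to a k-algebra isomorphism H(α, β, γ) → H(α', β', γ'). -/

import Mathlib

/-- Generators of the path algebra of the doubled `n`-cycle quiver:
vertices `e i`, arrows `u i : i → i+1` and `d i : i+1 → i`. -/
inductive DUGen (n : ℕ) : Type
  | e : ZMod n → DUGen n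
  | u : ZMod n → DUGen n
  | d : ZMod n → DUGen n

variable (k : Type*) [Field k] (n : ℕ)

/-- The trivial path `e_i` in the free algebra. -/
def Ew (i : ZMod n) : FreeAlgebra k (DUGen n) := FreeAlgebra.ι k (DUGen.e i)
/-- The arrow `u_i : i → i+1` in the free algebra. -/
def Uw (i : ZMod n) : FreeAlgebra k (DUGen n) := FreeAlgebra.ι k (DUGen.u i)
/-- The arrow `d_i : i+1 → i` in the free algebra. -/
def Dw (i : ZMod n) : FreeAlgebra k (DUGen n) := FreeAlgebra.ι k (DUGen.d i)

variable [NeZero n]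

/-- The relations presenting the quiver down-up algebra `H(α,β,γ)`: the path algebra
relations for the doubled `n`-cycle quiver, together with the down-up relations
`d_{i-1}u_{i-1}u_i = α_i u_i d_i u_i + β_i u_i u_{i+1} d_{i+1} + γ_i u_i` and
`d_i d_{i-1} u_{i-1} = α_i d_i u_i d_i + β_i u_{i+1} d_{i+1} d_i + γ_i d_i`. -/
inductive DURel (α β γ : ZMod n → k) :
    FreeAlgebra k (DUGen n) → FreeAlgebra k (DUGen n) → Prop
  | ortho (i j : ZMod n) :
      DURel α β γ (Ew k n i * Ew k n j) (if i = j then Ew k n i else 0)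
  | total : DURel α β γ (∑ i : ZMod n, Ew k n i) 1
  | eu (i : ZMod n) : DURel α β γ (Ew k n i * Uw k n i) (Uw k n i)
  | ue (i : ZMod n) : DURel α β γ (Uw k n i * Ew k n (i+1)) (Uw k n i)
  | ed (i : ZMod n) : DURel α β γ (Ew k n (i+1) * Dw k n i) (Dw k n i)
  | de (i : ZMod n) : DURel α β γ (Dw k n i * Ew k n i) (Dw k n i)
  | rel1 (i : ZMod n) : DURel α β γ (Dw k n (i-1) * Uw k n (i-1) * Uw k n i)
      (α i • (Uw k n i * Dw k n i * Uw k n i)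
        + β i • (Uw k n i * Uw k n (i+1) * Dw k n (i+1)) + γ i • Uw k n i)
  | rel2 (i : ZMod n) : DURel α β γ (Dw k n i * Dw k n (i-1) * Uw k n (i-1))
      (α i • (Dw k n i * Uw k n i * Dw k n i)
        + β i • (Uw k n (i+1) * Dw k n (i+1) * Dw k n i) + γ i • Dw k n i)

/-- The quiver down-up algebra `H(α,β,γ)`. -/
abbrev Hdu (α β γ : ZMod n → k) := RingQuot (DURel k n α β γ)

variable (α β γ : ZMod n → k)

/-- The image of the trivial path `e_i` in `H(α,β,γ)`. -/
def eH (i : ZMod n) : Hdu k n α β γ := RingQuot.mkAlgHom k (DURel k n α β γ) (Ew k n i)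
/-- The image of the arrow `u_i` in `H(α,β,γ)`. -/
def uH (i : ZMod n) : Hdu k n α β γ := RingQuot.mkAlgHom k (DURel k n α β γ) (Uw k n i)
/-- The image of the arrow `d_i` in `H(α,β,γ)`. -/
def dH (i : ZMod n) : Hdu k n α β γ := RingQuot.mkAlgHom k (DURel k n α β γ) (Dw k n i)

/-! Rescaling `u_i` by `λ_i` multiplies each monomial of the `i`-th down-up relations by the
product of the `λ_j` of the arrows `u_j` it contains. Dividing by the factor `λ_{i-1} λ_i` of
`d_{i-1} u_{i-1} u_i` (resp. `λ_{i-1}` of `d_i d_{i-1} u_{i-1}`) turns `(α, β, γ)` into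
`(α', β', γ')`, so the assignment respects the defining relations; rescaling by `λ⁻¹` inverts it. -/

section Rescaling

variable {k n α β γ}

theorem eH_mul_eH (i j : ZMod n) :
    eH k n α β γ i * eH k n α β γ j = if i = j then eH k n α β γ i else 0 := by
  simpa [eH, apply_ite (RingQuot.mkAlgHom k (DURel k n α β γ))] using
    RingQuot.mkAlgHom_rel k (DURel.ortho (α := α) (β := β) (γ := γ) i j)

theorem sum_eH : ∑ i : ZMod n, eH k n α β γ i = 1 := by
  simpa [eH] using RingQuot.mkAlgHom_rel k (DURel.total (α := α) (β := β) (γ := γ))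

theorem eH_mul_uH (i : ZMod n) : eH k n α β γ i * uH k n α β γ i = uH k n α β γ i := by
  simpa [eH, uH] using RingQuot.mkAlgHom_rel k (DURel.eu (α := α) (β := β) (γ := γ) i)

theorem uH_mul_eH (i : ZMod n) : uH k n α β γ i * eH k n α β γ (i+1) = uH k n α β γ i := by
  simpa [eH, uH] using RingQuot.mkAlgHom_rel k (DURel.ue (α := α) (β := β) (γ := γ) i)

theorem eH_mul_dH (i : ZMod n) : eH k n α β γ (i+1) * dH k n α β γ i = dH k n α β γ i := by
  simpa [eH, dH] using RingQuot.mkAlgHom_rel k (DURel.ed (α := α) (β := β) (γ := γ) i)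

theorem dH_mul_eH (i : ZMod n) : dH k n α β γ i * eH k n α β γ i = dH k n α β γ i := by
  simpa [eH, dH] using RingQuot.mkAlgHom_rel k (DURel.de (α := α) (β := β) (γ := γ) i)

theorem dH_mul_uH_mul_uH (i : ZMod n) :
    dH k n α β γ (i-1) * uH k n α β γ (i-1) * uH k n α β γ i
      = α i • (uH k n α β γ i * dH k n α β γ i * uH k n α β γ i)
        + β i • (uH k n α β γ i * uH k n α β γ (i+1) * dH k n α β γ (i+1))
        + γ i • uH k n α β γ i := by
  simpa [uH, dH] using RingQuot.mkAlgHom_rel k (DURel.rel1 (α := α) (β := β) (γ := γ) i)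

theorem dH_mul_dH_mul_uH (i : ZMod n) :
    dH k n α β γ i * dH k n α β γ (i-1) * uH k n α β γ (i-1)
      = α i • (dH k n α β γ i * uH k n α β γ i * dH k n α β γ i)
        + β i • (uH k n α β γ (i+1) * dH k n α β γ (i+1) * dH k n α β γ i)
        + γ i • dH k n α β γ i := by
  simpa [uH, dH] using RingQuot.mkAlgHom_rel k (DURel.rel2 (α := α) (β := β) (γ := γ) i)

theorem Hdu.algHom_ext {A : Type*} [Semiring A] [Algebra k A] {f g : Hdu k n α β γ →ₐ[k] A}
    (he : ∀ i, f (eH k n α β γ i) = g (eH k n α β γ i))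
    (hu : ∀ i, f (uH k n α β γ i) = g (uH k n α β γ i))
    (hd : ∀ i, f (dH k n α β γ i) = g (dH k n α β γ i)) : f = g := by
  refine RingQuot.ringQuot_ext' _ _ _ (FreeAlgebra.hom_ext (funext fun x => ?_))
  cases x with
  | e i => exact he i
  | u i => exact hu i
  | d i => exact hd i

omit [NeZero n] in
/-- `(α', β', γ')` is obtained from `(α, β, γ)` by rescaling `u_i` by `lam i`; written without
division so that it makes sense for arbitrary `lam`. -/
structure IsRescaling (lam α β γ α' β' γ' : ZMod n → k) : Prop where
  α_eq : ∀ i, lam (i-1) * α' i = lam i * α i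
  β_eq : ∀ i, lam (i-1) * β' i = lam (i+1) * β i
  γ_eq : ∀ i, lam (i-1) * γ' i = γ i

omit [NeZero n] in
theorem isRescaling_of_ne_zero {lam : ZMod n → k} (hlam : ∀ i, lam i ≠ 0) :
    IsRescaling lam α β γ (fun i => lam i * (lam (i-1))⁻¹ * α i)
      (fun i => lam (i+1) * (lam (i-1))⁻¹ * β i) (fun i => (lam (i-1))⁻¹ * γ i) where
  α_eq i := by field_simp [hlam (i-1)]
  β_eq i := by field_simp [hlam (i-1)]
  γ_eq i := by field_simp [hlam (i-1)]

omit [NeZero n] in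
theorem IsRescaling.inv {lam α' β' γ' : ZMod n → k} (h : IsRescaling lam α β γ α' β' γ')
    (hlam : ∀ i, lam i ≠ 0) : IsRescaling (fun i => (lam i)⁻¹) α' β' γ' α β γ where
  α_eq i := by field_simp [hlam (i-1), hlam i]; linear_combination -h.α_eq i
  β_eq i := by field_simp [hlam (i-1), hlam (i+1)]; linear_combination -h.β_eq i
  γ_eq i := by field_simp [hlam (i-1)]; linear_combination -h.γ_eq i

noncomputable def rescaleFree (lam : ZMod n → k) :
    FreeAlgebra k (DUGen n) →ₐ[k] Hdu k n α β γ :=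
  FreeAlgebra.lift k fun
    | .e i => eH k n α β γ i
    | .u i => lam i • uH k n α β γ i
    | .d i => dH k n α β γ i

@[simp] theorem rescaleFree_Ew (lam : ZMod n → k) (i : ZMod n) :
    rescaleFree (α := α) (β := β) (γ := γ) lam (Ew k n i) = eH k n α β γ i := by
  simp [rescaleFree, Ew]

@[simp] theorem rescaleFree_Uw (lam : ZMod n → k) (i : ZMod n) :
    rescaleFree (α := α) (β := β) (γ := γ) lam (Uw k n i) = lam i • uH k n α β γ i := by
  simp [rescaleFree, Uw]

@[simp] theorem rescaleFree_Dw (lam : ZMod n → k) (i : ZMod n) :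
    rescaleFree (α := α) (β := β) (γ := γ) lam (Dw k n i) = dH k n α β γ i := by
  simp [rescaleFree, Dw]

theorem rescaleFree_eq_of_rel {lam α' β' γ' : ZMod n → k} (h : IsRescaling lam α β γ α' β' γ')
    {x y : FreeAlgebra k (DUGen n)} (hxy : DURel k n α β γ x y) :
    rescaleFree (α := α') (β := β') (γ := γ') lam x = rescaleFree lam y := by
  induction hxy with
  | ortho i j => simp [apply_ite (rescaleFree lam), eH_mul_eH]
  | total => simp [sum_eH]
  | eu i => simp [eH_mul_uH]
  | ue i => simp [uH_mul_eH]
  | ed i => simp [eH_mul_dH]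
  | de i => simp [dH_mul_eH]
  | rel1 i =>
    simp only [map_mul, map_add, map_smul, rescaleFree_Uw, rescaleFree_Dw, smul_mul_assoc,
      mul_smul_comm, dH_mul_uH_mul_uH]
    match_scalars
    · linear_combination lam i * h.α_eq i
    · linear_combination lam i * h.β_eq i
    · linear_combination lam i * h.γ_eq i
  | rel2 i =>
    simp only [map_mul, map_add, map_smul, rescaleFree_Uw, rescaleFree_Dw, smul_mul_assoc,
      mul_smul_comm, dH_mul_dH_mul_uH]
    match_scalars
    · linear_combination h.α_eq i
    · linear_combination h.β_eq i
    · linear_combination h.γ_eq i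

noncomputable def rescaleHom {lam α' β' γ' : ZMod n → k} (h : IsRescaling lam α β γ α' β' γ') :
    Hdu k n α β γ →ₐ[k] Hdu k n α' β' γ' :=
  RingQuot.liftAlgHom k ⟨rescaleFree lam, fun _ _ hxy => rescaleFree_eq_of_rel h hxy⟩

section
variable {lam α' β' γ' : ZMod n → k} (h : IsRescaling lam α β γ α' β' γ') (i : ZMod n)

@[simp] theorem rescaleHom_eH : rescaleHom h (eH k n α β γ i) = eH k n α' β' γ' i := by
  simp [rescaleHom, eH, RingQuot.liftAlgHom_mkAlgHom_apply]

@[simp] theorem rescaleHom_uH : rescaleHom h (uH k n α β γ i) = lam i • uH k n α' β' γ' i := by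
  simp [rescaleHom, uH, RingQuot.liftAlgHom_mkAlgHom_apply]

@[simp] theorem rescaleHom_dH : rescaleHom h (dH k n α β γ i) = dH k n α' β' γ' i := by
  simp [rescaleHom, dH, RingQuot.liftAlgHom_mkAlgHom_apply]

end

theorem rescaleHom_comp_rescaleHom {lam mu α' β' γ' : ZMod n → k}
    (h : IsRescaling lam α β γ α' β' γ') (h' : IsRescaling mu α' β' γ' α β γ)
    (hmu : ∀ i, lam i * mu i = 1) : (rescaleHom h').comp (rescaleHom h) = AlgHom.id k _ :=
  Hdu.algHom_ext (by simp) (fun i => by simp [smul_smul, hmu i]) (by simp)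

noncomputable def rescaleEquiv {lam α' β' γ' : ZMod n → k} (h : IsRescaling lam α β γ α' β' γ')
    (hlam : ∀ i, lam i ≠ 0) : Hdu k n α β γ ≃ₐ[k] Hdu k n α' β' γ' :=
  AlgEquiv.ofAlgHom (rescaleHom h) (rescaleHom (h.inv hlam))
    (rescaleHom_comp_rescaleHom _ _ fun i => inv_mul_cancel₀ (hlam i))
    (rescaleHom_comp_rescaleHom _ _ fun i => mul_inv_cancel₀ (hlam i))

end Rescaling

/-- Scaling isomorphism: for `λ ∈ (k^×)^n`, with `α'_i = λ_i λ_{i-1}⁻¹ α_i`,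
`β'_i = λ_{i+1} λ_{i-1}⁻¹ β_i`, `γ'_i = λ_{i-1}⁻¹ γ_i`, the assignment
`e_i ↦ e_i`, `u_i ↦ λ_i u_i`, `d_i ↦ d_i` extends to a `k`-algebra isomorphism
`H(α,β,γ) → H(α',β',γ')`. -/
theorem stmt12 (lam : ZMod n → k) (hlam : ∀ i, lam i ≠ 0) :
    ∃ φ : Hdu k n α β γ ≃ₐ[k]
      Hdu k n (fun i => lam i * (lam (i-1))⁻¹ * α i)
        (fun i => lam (i+1) * (lam (i-1))⁻¹ * β i)
        (fun i => (lam (i-1))⁻¹ * γ i),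
    ∀ i : ZMod n,
      φ (eH k n α β γ i)
          = eH k n (fun i => lam i * (lam (i-1))⁻¹ * α i)
              (fun i => lam (i+1) * (lam (i-1))⁻¹ * β i)
              (fun i => (lam (i-1))⁻¹ * γ i) i ∧
      φ (uH k n α β γ i)
          = lam i • uH k n (fun i => lam i * (lam (i-1))⁻¹ * α i)
              (fun i => lam (i+1) * (lam (i-1))⁻¹ * β i)
              (fun i => (lam (i-1))⁻¹ * γ i) i ∧
      φ (dH k n α β γ i)
          = dH k n (fun i => lam i * (lam (i-1))⁻¹ * α i)
              (fun i => lam (i+1) * (lam (i-1))⁻¹ * β i)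
              (fun i => (lam (i-1))⁻¹ * γ i) i := by
  have h := isRescaling_of_ne_zero (α := α) (β := β) (γ := γ) hlam
  exact ⟨rescaleEquiv h hlam, fun i =>
    ⟨rescaleHom_eH h i, rescaleHom_uH h i, rescaleHom_dH h i⟩⟩
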